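/- Let D be a lattice in ℝⁿ×ℝⁿ, H(g̲,h̲) = g̲ᵗ(Im T)^{-1}h̲*, and let e_D(h) satisfy the multiplication rule e_D(g)e_D(h) = exp(πi Im H(g̲,h̲)) e_D(g+h). Then Manin's quantum theta function Θ_D = Σ_{h∈D} exp(−(π/2)H(h̲,h̲)) e_D(h) satisfies, for every g ∈ D: exp(−(π/2)H(g̲,g̲)) · e_D(g) · x_g*(Θ_D) = Θ_D, where x_g*(e_D(h)) = exp(−π H(g̲,h̲)) e_D(h). -/
import Mathlib


open Real Complex Matrix

noncomputable section

def cvec {n : ℕ} (v : Fin n → ℝ) : Fin n → ℂ := fun i => (v i : ℂ)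

/-- `h̲ = T h₁ + h₂`. -/
def uVec {n : ℕ} (T : Matrix (Fin n) (Fin n) ℂ) (h : (Fin n → ℝ) × (Fin n → ℝ)) :
    Fin n → ℂ :=
  T.mulVec (cvec h.1) + cvec h.2

/-- `h̲* = conj(T) h₁ + h₂`. -/
def uVecStar {n : ℕ} (T : Matrix (Fin n) (Fin n) ℂ) (h : (Fin n → ℝ) × (Fin n → ℝ)) :
    Fin n → ℂ :=
  (T.map (starRingEnd ℂ)).mulVec (cvec h.1) + cvec h.2

/-- `H(g̲,h̲) = g̲ᵗ (Im T)⁻¹ h̲*`. -/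
def Hform {n : ℕ} (T : Matrix (Fin n) (Fin n) ℂ)
    (g h : (Fin n → ℝ) × (Fin n → ℝ)) : ℂ :=
  dotProduct (uVec T g) ((((T.map Complex.im)⁻¹).map (fun r => (r : ℂ))).mulVec (uVecStar T h))

lemma cvec_add {n : ℕ} (v w : Fin n → ℝ) : cvec (v + w) = cvec v + cvec w := by
  funext i; simp [cvec]

lemma uVec_add {n : ℕ} (T : Matrix (Fin n) (Fin n) ℂ) (a b : (Fin n → ℝ) × (Fin n → ℝ)) :
    uVec T (a + b) = uVec T a + uVec T b := by
  simp [uVec, cvec_add, Matrix.mulVec_add]; abel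

lemma uVecStar_add {n : ℕ} (T : Matrix (Fin n) (Fin n) ℂ) (a b : (Fin n → ℝ) × (Fin n → ℝ)) :
    uVecStar T (a + b) = uVecStar T a + uVecStar T b := by
  simp [uVecStar, cvec_add, Matrix.mulVec_add]; abel

lemma conj_uVec {n : ℕ} (T : Matrix (Fin n) (Fin n) ℂ) (h : (Fin n → ℝ) × (Fin n → ℝ)) (i : Fin n) :
    (starRingEnd ℂ) (uVec T h i) = uVecStar T h i := by
  simp [uVec, uVecStar, Matrix.mulVec, dotProduct, map_sum, _root_.map_mul, cvec,
    Matrix.map_apply, Complex.conj_ofReal]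

lemma conj_uVecStar {n : ℕ} (T : Matrix (Fin n) (Fin n) ℂ) (h : (Fin n → ℝ) × (Fin n → ℝ)) (i : Fin n) :
    (starRingEnd ℂ) (uVecStar T h i) = uVec T h i := by
  rw [← conj_uVec]; exact Complex.conj_conj _

lemma Hform_add_add {n : ℕ} (T : Matrix (Fin n) (Fin n) ℂ) (a b : (Fin n → ℝ) × (Fin n → ℝ)) :
    Hform T (a + b) (a + b) =
      Hform T a a + Hform T a b + Hform T b a + Hform T b b := by
  simp [Hform, uVec_add, uVecStar_add, Matrix.mulVec_add, dotProduct_add,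
    add_dotProduct]
  ring

lemma Hform_swap {n : ℕ} (T : Matrix (Fin n) (Fin n) ℂ) (hsymm : T.IsSymm)
    (a b : (Fin n → ℝ) × (Fin n → ℝ)) :
    Hform T b a = (starRingEnd ℂ) (Hform T a b) := by
  set M := (((T.map Complex.im)⁻¹).map (fun r => (r : ℂ))) with hM
  have hMsymm : M.IsSymm := by
    have h1 : (T.map Complex.im).IsSymm := hsymm.map _
    have h2 : ((T.map Complex.im)⁻¹).IsSymm := by
      unfold Matrix.IsSymm
      rw [Matrix.transpose_nonsing_inv, h1]
    exact h2.map _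
  have hMconj : ∀ i j, (starRingEnd ℂ) (M i j) = M i j := by
    intro i j; simp [hM, Matrix.map_apply]
  have key : (starRingEnd ℂ) (Hform T a b) =
      dotProduct (uVecStar T a) (M.mulVec (uVec T b)) := by
    simp only [Hform, dotProduct, Matrix.mulVec, map_sum, _root_.map_mul, ← hM]
    refine Finset.sum_congr rfl fun i _ => ?_
    rw [conj_uVec]
    congr 1
    exact Finset.sum_congr rfl fun j _ => by rw [hMconj, conj_uVecStar]
  rw [key]
  rw [Matrix.dotProduct_mulVec, ← Matrix.mulVec_transpose, hMsymm.eq,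
    dotProduct_comm]
  rfl


/-- Manin's quantum theta function
`Θ_D = Σ_{h∈D} exp(−(π/2)H(h̲,h̲)) e_D(h)` in the twisted group algebra
(generated by elements `e h` of a complete normed `ℂ`-algebra obeying the twisted
multiplication rule) satisfies, for every `g ∈ D`,
`exp(−(π/2)H(g̲,g̲)) · e_D(g) · x_g*(Θ_D) = Θ_D`, where the quantum translation
acts by `x_g*(e_D(h)) = exp(−π H(g̲,h̲)) e_D(h)`. -/
theorem quantum_theta_functional_equation {n : ℕ} (T : Matrix (Fin n) (Fin n) ℂ)
    (hsymm : T.IsSymm) (hpos : (T.map Complex.im).PosDef)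
    (D : AddSubgroup ((Fin n → ℝ) × (Fin n → ℝ)))
    (A : Type*) [NormedRing A] [NormedAlgebra ℂ A] [CompleteSpace A]
    (e : D → A)
    (hmul : ∀ g h : D, e g * e h =
      Complex.exp ((π : ℂ) * Complex.I * (Hform T (g : _) (h : _)).im) • e (g + h))
    (g : D)
    (hsum : Summable (fun h : D => Complex.exp (-((π : ℂ) / 2) * Hform T h h) • e h))
    (hsum' : Summable (fun h : D =>
      (Complex.exp (-((π : ℂ) / 2) * Hform T h h) *
        Complex.exp (-(π : ℂ) * Hform T g h)) • e h)) :
    Complex.exp (-((π : ℂ) / 2) * Hform T g g) •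
      (e g * ∑' h : D,
        (Complex.exp (-((π : ℂ) / 2) * Hform T h h) *
          Complex.exp (-(π : ℂ) * Hform T g h)) • e h) =
    ∑' h : D, Complex.exp (-((π : ℂ) / 2) * Hform T h h) • e h := by
  set c : D → ℂ := fun h => Complex.exp (-((π : ℂ) / 2) * Hform T h h) *
      Complex.exp (-(π : ℂ) * Hform T g h) with hc
  set Cg : ℂ := Complex.exp (-((π : ℂ) / 2) * Hform T g g) with hCg
  have key : ∀ h : D,
      Cg • (c h • (e g * e h)) =
      Complex.exp (-((π : ℂ) / 2) * Hform T (↑(g + h)) (↑(g + h))) • e (g + h) := by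
    intro h
    rw [hmul, smul_smul, smul_smul]
    congr 1
    have hcast : ((g + h : D) : (Fin n → ℝ) × (Fin n → ℝ)) = (↑g : _) + ↑h := rfl
    have hswap := Hform_swap T hsymm (↑g) (↑h)
    rw [hcast, Hform_add_add, hc, hCg]
    simp only [← Complex.exp_add]
    congr 1
    have hswap2 : Hform T (↑h) (↑g) =
        Hform T (↑g) (↑h) - 2 * ((Hform T (↑g) (↑h)).im : ℂ) * Complex.I := by
      rw [hswap]
      have := Complex.sub_conj (Hform T (↑g) (↑h))
      push_cast at this
      linear_combination -this
    linear_combination ((π : ℂ)/2) * hswap2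
  calc Cg • (e g * ∑' h : D, c h • e h)
      = Cg • ∑' h : D, e g * (c h • e h) := by
        rw [Summable.tsum_mul_left (e g) hsum']
    _ = ∑' h : D, Cg • (e g * (c h • e h)) := by
        rw [Summable.tsum_const_smul Cg (hsum'.mul_left (e g))]
    _ = ∑' h : D, Cg • (c h • (e g * e h)) := by
        simp only [mul_smul_comm]
    _ = ∑' h : D, Complex.exp (-((π : ℂ) / 2) * Hform T (↑(g + h)) (↑(g + h))) • e (g + h) :=
        tsum_congr key
    _ = ∑' h : D, Complex.exp (-((π : ℂ) / 2) * Hform T (↑h) (↑h)) • e h :=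
        (Equiv.addLeft g).tsum_eq
          (fun h : D => Complex.exp (-((π : ℂ) / 2) * Hform T (↑h) (↑h)) • e h)


end
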